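/- Let Φ : [0,∞) → [0,∞) satisfy Φ(0)=0, Φ continuous and strictly increasing. Let E ⊂ R^d be compact with finite s-dimensional Hausdorff measure H^s(E) < ∞. Then cap_{Φ,s}(E) = 0, where cap_{Φ,s}(E) = sup{ μ(E) : supp(μ) ⊂ E, ∫₀^∞ Φ(μ(B(x,r))/r^s) dr/r ≤ 1 for all x ∈ R^d }. -/

import Mathlib

/-!
For an admissible `μ` the Wolff integral `∫₀^∞ Φ(μ(B(x,r))/r^s) dr/r` is finite at every
`x`, so its part over `(0, 2r)` tends to `0` with `r`. A ball with `μ(B(x,r)) ≥ t r^s` would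
make the integrand at least `Φ(t/2^s)/(2r)` on `[r, 2r)`, a contribution of `Φ(t/2^s)/2`; hence
`μ(B(x,r)) ≤ t r^s` for all small `r`, at every point. Comparing `μ` with the covers defining
`H^s` then gives `μ(E) ≤ t H^s(E)` for every `t > 0`, so `μ(E) = 0` since `H^s(E) < ∞`.
-/

open MeasureTheory Metric Set
open scoped ENNReal

/-- The `s`-dimensional Wolff potential of `μ` with gauge `Φ`. -/
noncomputable def wolffPotential (d : ℕ) (s : ℝ) (Φ : ℝ → ℝ)
    (μ : Measure (EuclideanSpace ℝ (Fin d))) (x : EuclideanSpace ℝ (Fin d)) : ℝ≥0∞ :=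
  ∫⁻ r in Set.Ioi (0 : ℝ), ENNReal.ofReal (Φ ((μ (ball x r)).toReal / r ^ s) / r)

/-- The nonlinear capacity associated to the gauge `Φ` (level `1`). -/
noncomputable def capPhi (d : ℕ) (s : ℝ) (Φ : ℝ → ℝ)
    (E : Set (EuclideanSpace ℝ (Fin d))) : ℝ≥0∞ :=
  sSup {m : ℝ≥0∞ | ∃ μ : Measure (EuclideanSpace ℝ (Fin d)), IsFiniteMeasure μ ∧
    μ Eᶜ = 0 ∧ (∀ x, wolffPotential d s Φ μ x ≤ 1) ∧ m = μ E}

open Filter Topology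

theorem tendsto_setLIntegral_Ioo_nhdsGT {a : ℝ} {f : ℝ → ℝ≥0∞}
    (hf : ∫⁻ y in Ioi a, f y ≠ ∞) :
    Tendsto (fun b => ∫⁻ y in Ioo a b, f y) (𝓝[>] a) (𝓝 0) := by
  have hvol : Tendsto (volume.restrict (Ioi a) ∘ Ioo a) (𝓝[>] a) (𝓝 0) := by
    have hlim : Tendsto (fun b => ENNReal.ofReal (b - a)) (𝓝[>] a) (𝓝 0) := by
      simpa using ENNReal.tendsto_ofReal
        (tendsto_sub_nhds_zero_iff.2 (tendsto_nhdsWithin_of_tendsto_nhds tendsto_id))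
    refine hlim.congr fun b => ?_
    simp [Measure.restrict_apply measurableSet_Ioo, inter_eq_left.2 Ioo_subset_Ioi_self]
  refine (tendsto_setLIntegral_zero hf hvol).congr fun b => ?_
  rw [Measure.restrict_restrict_of_subset Ioo_subset_Ioi_self]

section Wolff

variable {X : Type*} [PseudoMetricSpace X] [MeasurableSpace X] {μ : Measure X}
  [IsFiniteMeasure μ] {Φ : ℝ → ℝ} {s t : ℝ} {x : X}

theorem ofReal_le_setLIntegral_of_le_measure_ball (hΦ : MonotoneOn Φ (Ici 0)) (hs : 0 ≤ s)
    (ht : 0 ≤ t) {r : ℝ} (hr : 0 < r)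
    (hμ : ENNReal.ofReal (t * (2 * r) ^ s) ≤ μ (ball x r)) :
    ENNReal.ofReal (Φ t / 2) ≤
      ∫⁻ y in Ico r (2 * r), ENNReal.ofReal (Φ ((μ (ball x y)).toReal / y ^ s) / y) := by
  have hconst :
      ENNReal.ofReal (Φ t / 2) = ∫⁻ _ in Ico r (2 * r), ENNReal.ofReal (Φ t / (2 * r)) := by
    rw [setLIntegral_const, Real.volume_Ico, ← ENNReal.ofReal_mul' (by linarith)]
    congr 1
    field_simp
    ring
  rw [hconst]
  refine setLIntegral_mono' measurableSet_Ico fun y ⟨hry, hy⟩ => ?_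
  have hy0 : 0 < y := hr.trans_le hry
  have hratio : t ≤ (μ (ball x y)).toReal / y ^ s := by
    rw [le_div_iff₀ (by positivity)]
    calc t * y ^ s ≤ t * (2 * r) ^ s := by gcongr
      _ ≤ (μ (ball x r)).toReal := (ENNReal.ofReal_le_iff_le_toReal (measure_ne_top _ _)).1 hμ
      _ ≤ (μ (ball x y)).toReal :=
        ENNReal.toReal_mono (measure_ne_top _ _) (measure_mono (ball_subset_ball hry))
  have hΦratio := hΦ ht (ht.trans hratio) hratio
  refine ENNReal.ofReal_le_ofReal_iff'.2 ?_
  rcases le_or_gt (Φ t) 0 with hΦt | hΦt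
  · exact .inr (div_nonpos_of_nonpos_of_nonneg hΦt (by positivity))
  · exact .inl (div_le_div₀ (hΦt.le.trans hΦratio) hΦratio hy0 hy.le)

theorem eventually_measure_ball_le_of_lintegral_ne_top (hΦ : MonotoneOn Φ (Ici 0))
    (hΦpos : ∀ u, 0 < u → 0 < Φ u) (hs : 0 ≤ s) (ht : 0 < t)
    (hx : ∫⁻ r in Ioi 0, ENNReal.ofReal (Φ ((μ (ball x r)).toReal / r ^ s) / r) ≠ ∞) :
    ∀ᶠ r in 𝓝[>] 0, μ (ball x r) ≤ ENNReal.ofReal t * ENNReal.ofReal r ^ s := by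
  have hΦt' : 0 < ENNReal.ofReal (Φ (t / 2 ^ s) / 2) :=
    ENNReal.ofReal_pos.2 (half_pos (hΦpos _ (by positivity)))
  have hsmall := eventually_nhdsGT_zero_mul_left two_pos
    ((tendsto_setLIntegral_Ioo_nhdsGT hx).eventually (gt_mem_nhds hΦt'))
  filter_upwards [hsmall, self_mem_nhdsWithin] with r hr (hr0 : 0 < r)
  rw [ENNReal.ofReal_rpow_of_nonneg hr0.le hs, ← ENNReal.ofReal_mul ht.le]
  by_contra! hbig
  have hμ : ENNReal.ofReal (t / 2 ^ s * (2 * r) ^ s) ≤ μ (ball x r) := by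
    rw [Real.mul_rpow zero_le_two hr0.le, ← mul_assoc, div_mul_cancel₀ t (by positivity)]
    exact hbig.le
  have hwindow := ofReal_le_setLIntegral_of_le_measure_ball hΦ hs (by positivity) hr0 hμ
  exact hr.not_ge (hwindow.trans (lintegral_mono_set (Ico_subset_Ioo_left hr0)))

end Wolff

theorem measure_closedBall_le_of_forall_measure_ball_le {X : Type*} [PseudoMetricSpace X]
    [MeasurableSpace X] {μ : Measure X} {x : X} {c : ℝ≥0∞} {s ρ r : ℝ} (hc : c ≠ ∞)
    (h : ∀ r' ∈ Ioo 0 ρ, μ (ball x r') ≤ c * ENNReal.ofReal r' ^ s) (hr : 0 ≤ r)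
    (hrρ : r < ρ) :
    μ (closedBall x r) ≤ c * ENNReal.ofReal r ^ s := by
  have hlim : Tendsto (fun r' => c * ENNReal.ofReal r' ^ s) (𝓝[>] r)
      (𝓝 (c * ENNReal.ofReal r ^ s)) :=
    (ENNReal.Tendsto.const_mul
      ((ENNReal.continuous_rpow_const.comp ENNReal.continuous_ofReal).tendsto r)
      (Or.inr hc)).mono_left nhdsWithin_le_nhds
  refine ge_of_tendsto hlim ?_
  filter_upwards [Ioo_mem_nhdsGT hrρ] with r' hr'
  exact (measure_mono (closedBall_subset_ball hr'.1)).trans (h r' ⟨hr.trans_lt hr'.1, hr'.2⟩)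

section HausdorffBound

variable {X : Type*} [MetricSpace X] [MeasurableSpace X] [BorelSpace X] {μ : Measure X}
  {c : ℝ≥0∞} {s : ℝ}

theorem measure_le_mul_hausdorffMeasure_of_measure_ball_le {F : Set X} {ρ : ℝ}
    (hc : c ≠ ∞) (hc0 : c ≠ 0) (hρ : 0 < ρ)
    (h : ∀ x ∈ F, ∀ r ∈ Ioo 0 ρ, μ (ball x r) ≤ c * ENNReal.ofReal r ^ s) :
    μ F ≤ c * μH[s] F := by
  -- `F` need not be measurable, so `μ` is restricted to `F` as an outer measure.
  have hle : μ.toOuterMeasure.restrict F ≤ OuterMeasure.mkMetric (c • fun r => r ^ s) := by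
    refine OuterMeasure.le_mkMetric _ _ (ENNReal.ofReal (ρ / 2)) (by simp [hρ]) fun S hS => ?_
    rw [OuterMeasure.restrict_apply]
    rcases (S ∩ F).eq_empty_or_nonempty with hSF | ⟨x, hxS, hxF⟩
    · simp [hSF]
    have hSfin : ediam S ≠ ∞ := ne_top_of_le_ne_top ENNReal.ofReal_ne_top hS
    have hSball : S ⊆ closedBall x (diam S) := fun y hy =>
      mem_closedBall.2 (dist_le_diam_of_mem' hSfin hy hxS)
    have hSρ : diam S < ρ :=
      (ENNReal.toReal_le_of_le_ofReal (by positivity) hS).trans_lt (half_lt_self hρ)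
    calc μ (S ∩ F) ≤ μ (closedBall x (diam S)) :=
          measure_mono (inter_subset_left.trans hSball)
      _ ≤ c * ENNReal.ofReal (diam S) ^ s :=
        measure_closedBall_le_of_forall_measure_ball_le hc (h x hxF) diam_nonneg hSρ
      _ = (c • fun r => r ^ s) (ediam S) := by rw [diam, ENNReal.ofReal_toReal hSfin]; rfl
  have hF := hle F
  rwa [OuterMeasure.restrict_apply, inter_self, OuterMeasure.mkMetric_smul _ hc hc0,
    ← Measure.mkMetric_toOuterMeasure] at hF

theorem measure_le_mul_hausdorffMeasure_of_eventually_measure_ball_le {E : Set X}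
    (hc : c ≠ ∞) (hc0 : c ≠ 0)
    (h : ∀ x ∈ E, ∀ᶠ r in 𝓝[>] 0, μ (ball x r) ≤ c * ENNReal.ofReal r ^ s) :
    μ E ≤ c * μH[s] E := by
  set F : ℕ → Set X := fun n =>
    {x ∈ E | ∀ r ∈ Ioo 0 (1 / (n + 1 : ℝ)), μ (ball x r) ≤ c * ENNReal.ofReal r ^ s}
  have hF : Monotone F := fun m n hmn x hx =>
    ⟨hx.1, fun r hr => hx.2 r ⟨hr.1, hr.2.trans_le (Nat.one_div_le_one_div hmn)⟩⟩
  have hEF : E ⊆ ⋃ n, F n := by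
    intro x hx
    obtain ⟨u, hu, hsub⟩ := mem_nhdsGT_iff_exists_Ioo_subset.1 (h x hx)
    obtain ⟨n, hn⟩ := exists_nat_one_div_lt (mem_Ioi.1 hu)
    exact mem_iUnion.2 ⟨n, hx, fun r hr => hsub ⟨hr.1, hr.2.trans hn⟩⟩
  calc μ E ≤ μ (⋃ n, F n) := measure_mono hEF
    _ = ⨆ n, μ (F n) := hF.measure_iUnion
    _ ≤ c * μH[s] E := iSup_le fun n =>
      (measure_le_mul_hausdorffMeasure_of_measure_ball_le hc hc0 (by positivity)
        fun x hx => hx.2).trans (by gcongr; exact sep_subset _ _)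

end HausdorffBound

theorem capPhi_of_finite_hausdorff_eq_zero_general
    (d : ℕ) (s : ℝ) (hs0 : 0 < s)
    (Φ : ℝ → ℝ) (hΦ0 : Φ 0 = 0)
    (hΦmono : StrictMonoOn Φ (Set.Ici (0 : ℝ)))
    (E : Set (EuclideanSpace ℝ (Fin d)))
    (hH : μH[s] E < ⊤) :
    capPhi d s Φ E = 0 := by
  refine nonpos_iff_eq_zero.1 (sSup_le ?_)
  rintro _ ⟨μ, _, -, hμ, rfl⟩
  have hΦpos : ∀ u, 0 < u → 0 < Φ u := fun u hu => hΦ0 ▸ hΦmono self_mem_Ici hu.le hu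
  have hbound : ∀ t : ℝ, 0 < t → μ E ≤ ENNReal.ofReal t * μH[s] E := fun t ht =>
    measure_le_mul_hausdorffMeasure_of_eventually_measure_ball_le ENNReal.ofReal_ne_top
      (ENNReal.ofReal_pos.2 ht).ne' fun x _ =>
        eventually_measure_ball_le_of_lintegral_ne_top hΦmono.monotoneOn hΦpos hs0.le ht
          (ne_top_of_le_ne_top ENNReal.one_ne_top (hμ x))
  have hlim : Tendsto (fun t => ENNReal.ofReal t * μH[s] E) (𝓝[>] 0) (𝓝 0) := by
    simpa using ENNReal.Tendsto.mul_const (ENNReal.tendsto_ofReal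
      (tendsto_nhdsWithin_of_tendsto_nhds (tendsto_id (x := 𝓝 (0 : ℝ))))) (.inr hH.ne)
  exact ge_of_tendsto hlim (eventually_nhdsWithin_of_forall hbound)

/-- A compact set of finite `s`-dimensional Hausdorff measure has zero
nonlinear `Φ`-capacity, for any gauge `Φ`. -/
theorem capPhi_of_finite_hausdorff_eq_zero
    (d : ℕ) (hd : 2 ≤ d) (s : ℝ) (hs0 : 0 < s) (hsd : s ≤ d)
    (Φ : ℝ → ℝ) (hΦ0 : Φ 0 = 0) (hΦcont : Continuous Φ)
    (hΦmono : StrictMonoOn Φ (Set.Ici (0 : ℝ)))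
    (E : Set (EuclideanSpace ℝ (Fin d))) (hE : IsCompact E)
    (hH : μH[s] E < ⊤) :
    capPhi d s Φ E = 0 :=
  capPhi_of_finite_hausdorff_eq_zero_general d s hs0 Φ hΦ0 hΦmono E hH
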